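/- arXiv:2211.15299 — 6 statements merged into one kernel-verified Lean document; each statement's English description precedes it below -/
import Mathlib

section
/- Let N = 2^M and let J be a nonempty subset of Z_N of size k. Define a level r ∈ {0,...,M-1} to be a pivot of J if there exist distinct j1, j2 ∈ J such that 2^r is the exact power of 2 dividing j1 - j2 (i.e., j1 - j2 = odd · 2^r mod 2^M, meaning 2^r divides j1 - j2 but 2^{r+1} does not, viewing the difference as an element of Z/2^M). Then the number of pivots of J is at least log₂ k. -/
/-- The pivots of a set `J ⊆ ℤ/2^M ℤ`: the 2-adic valuations of differences
of distinct elements of `J` (via their natural representatives). -/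
def pivots (M : ℕ) (J : Finset (ZMod (2^M))) : Finset ℕ :=
  J.offDiag.image fun p => padicValNat 2 (p.1 - p.2).val

private lemma testBit_ne_of_mod {a b v : ℕ} (h0 : a % 2^v = b % 2^v)
    (h1 : a % 2^(v+1) ≠ b % 2^(v+1)) : a.testBit v ≠ b.testBit v := by
  intro h
  rw [Nat.testBit_eq_decide_div_mod_eq, Nat.testBit_eq_decide_div_mod_eq, decide_eq_decide] at h
  have ha : a / 2^v % 2 < 2 := Nat.mod_lt _ (by norm_num)
  have hb : b / 2^v % 2 < 2 := Nat.mod_lt _ (by norm_num)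
  have : a / 2^v % 2 = b / 2^v % 2 := by omega
  apply h1
  rw [Nat.mod_pow_succ, Nat.mod_pow_succ, h0, this]

/-- The number of pivots of a nonempty set `J` of size `k` is at least `log₂ k`. -/
theorem pivots_card_ge_log (M k : ℕ) (J : Finset (ZMod (2^M)))
    (hk : J.card = k) (hk1 : 1 ≤ k) :
    Real.logb 2 k ≤ ((pivots M J).card : ℝ) := by
  haveI : NeZero (2^M) := ⟨pow_ne_zero _ two_ne_zero⟩
  -- key: distinct elements of J differ at the bit given by the pivot
  have key : ∀ j1 ∈ J, ∀ j2 ∈ J, j1 ≠ j2 →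
      ∃ v ∈ pivots M J, j1.val.testBit v ≠ j2.val.testBit v := by
    intro j1 h1 j2 h2 hne
    set d : ℕ := (j1 - j2).val with hd
    have hdne : d ≠ 0 := by
      rw [hd, Ne, ZMod.val_eq_zero, sub_eq_zero]; exact hne
    set v : ℕ := padicValNat 2 d with hv
    refine ⟨v, Finset.mem_image.2 ⟨(j1, j2), Finset.mem_offDiag.2 ⟨h1, h2, hne⟩, rfl⟩, ?_⟩
    have hdvd : (2:ℕ)^v ∣ d := pow_padicValNat_dvd
    have hndvd : ¬ (2:ℕ)^(v+1) ∣ d := pow_succ_padicValNat_not_dvd hdne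
    have hvM : v + 1 ≤ M := by
      by_contra hcon
      have h1 : (2:ℕ)^M ≤ 2^v := Nat.pow_le_pow_right (by norm_num) (by omega)
      have h2 : (2:ℕ)^v ≤ d := Nat.le_of_dvd (Nat.pos_of_ne_zero hdne) hdvd
      have h3 : d < 2^M := ZMod.val_lt (j1 - j2)
      omega
    -- relate d to the integer difference of values
    have hcast : ((2:ℤ)^M) ∣ ((j1.val : ℤ) - (j2.val : ℤ) - (d : ℤ)) := by
      have : (((j1.val : ℤ) - (j2.val : ℤ) - (d : ℤ) : ℤ) : ZMod (2^M)) = 0 := by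
        push_cast
        rw [ZMod.natCast_val, ZMod.natCast_val, ZMod.natCast_val,
          ZMod.cast_id, ZMod.cast_id, ZMod.cast_id]
        ring
      have h := (ZMod.intCast_zmod_eq_zero_iff_dvd _ (2^M)).1 this
      exact_mod_cast h
    have hdvdz : ((2:ℤ)^v) ∣ ((j1.val : ℤ) - (j2.val : ℤ)) := by
      have h1 : ((2:ℤ)^v) ∣ ((j1.val : ℤ) - (j2.val : ℤ) - (d : ℤ)) :=
        dvd_trans (pow_dvd_pow 2 (by omega : v ≤ M)) hcast
      have h2 : ((2:ℤ)^v) ∣ (d : ℤ) := by exact_mod_cast Int.natCast_dvd_natCast.2 hdvd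
      have := dvd_add h1 h2
      simpa using this
    have hndvdz : ¬ ((2:ℤ)^(v+1)) ∣ ((j1.val : ℤ) - (j2.val : ℤ)) := by
      intro hcon
      apply hndvd
      have h1 : ((2:ℤ)^(v+1)) ∣ ((j1.val : ℤ) - (j2.val : ℤ) - (d : ℤ)) :=
        dvd_trans (pow_dvd_pow 2 hvM) hcast
      have h2 : ((2:ℤ)^(v+1)) ∣ (d : ℤ) := by
        have := dvd_sub hcon h1
        simpa using this
      exact_mod_cast Int.natCast_dvd_natCast.1 (by exact_mod_cast h2)
    apply testBit_ne_of_mod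
    · have : j2.val ≡ j1.val [MOD 2^v] := by
        rw [Nat.modEq_iff_dvd]
        push_cast
        exact hdvdz
      exact this.symm
    · intro hcon
      apply hndvdz
      have : j2.val ≡ j1.val [MOD 2^(v+1)] := hcon.symm
      rw [Nat.modEq_iff_dvd] at this
      push_cast at this
      exact this
  -- inject J into powerset of pivots
  have hinj : J.card ≤ (pivots M J).powerset.card := by
    apply Finset.card_le_card_of_injOn
      (fun j => (pivots M J).filter (fun r => j.val.testBit r))
    · intro j _; exact Finset.mem_powerset.2 (Finset.filter_subset _ _)
    · intro j1 h1 j2 h2 heq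
      by_contra hne
      obtain ⟨v, hvp, hvb⟩ := key j1 h1 j2 h2 hne
      apply hvb
      have e1 := Finset.ext_iff.1 heq v
      simp only [Finset.mem_filter, hvp, true_and] at e1
      rw [Bool.eq_iff_iff]
      exact e1
  rw [Finset.card_powerset] at hinj
  have hk2 : (k : ℝ) ≤ 2 ^ (pivots M J).card := by
    rw [← hk]
    exact_mod_cast hinj
  calc Real.logb 2 k ≤ Real.logb 2 (2 ^ (pivots M J).card) := by
        apply (Real.logb_le_logb (by norm_num) (by exact_mod_cast hk1) (by positivity)).2
        exact hk2
    _ = (pivots M J).card := by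
        rw [Real.logb_pow, Real.logb_self_eq_one (by norm_num), mul_one]
end

section
/- For N = 2^M, the set {0, 1, 2, ..., 2^s - 1} ⊆ Z_N (with s ≤ M) is homogeneous with pivot set {0, 1, ..., s-1}. -/
def IsHomogeneous (M : ℕ) (J : Finset (ZMod (2^M))) : Prop :=
  (pivots M J).card = Nat.log 2 J.card

lemma v2_two_pow_mul_odd (k t : ℕ) (ht : ¬ 2 ∣ t) : padicValNat 2 (2 ^ k * t) = k := by
  have ht0 : t ≠ 0 := by rintro rfl; exact ht (dvd_zero 2)
  rw [padicValNat.mul (by positivity) ht0, padicValNat.prime_pow,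
    padicValNat.eq_zero_of_not_dvd ht, add_zero]

lemma v2_lt (s d : ℕ) (hd : 0 < d) (hds : d < 2 ^ s) : padicValNat 2 d < s := by
  have h1 : 2 ^ padicValNat 2 d ≤ d := Nat.le_of_dvd hd pow_padicValNat_dvd
  exact (Nat.pow_lt_pow_iff_right one_lt_two).mp (h1.trans_lt hds)

lemma v2_sub (M d : ℕ) (hd : 0 < d) (hdM : d < 2 ^ M) (hvM : padicValNat 2 d < M) :
    padicValNat 2 (2 ^ M - d) = padicValNat 2 d := by
  set k := padicValNat 2 d with hk
  obtain ⟨m, hm⟩ : 2 ^ k ∣ d := pow_padicValNat_dvd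
  have hmodd : ¬ 2 ∣ m := by
    rintro ⟨c, hc⟩
    have hdd : 2 ^ (k + 1) ∣ d := ⟨c, by rw [hm, hc]; ring⟩
    haveI : Fact (Nat.Prime 2) := ⟨Nat.prime_two⟩
    have := (padicValNat_dvd_iff_le (p := 2) hd.ne').mp hdd
    omega
  have hsub : 2 ^ M - d = 2 ^ k * (2 ^ (M - k) - m) := by
    rw [Nat.mul_sub, ← pow_add, Nat.add_sub_cancel' hvM.le, hm]
  rw [hsub, v2_two_pow_mul_odd]
  intro hdvd2
  have heven : 2 ∣ 2 ^ (M - k) := dvd_pow_self 2 (by omega)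
  have hmlt : m < 2 ^ (M - k) := by
    have h2 : 2 ^ k * m < 2 ^ k * 2 ^ (M - k) := by
      rw [← pow_add, Nat.add_sub_cancel' hvM.le, ← hm]; exact hdM
    exact lt_of_mul_lt_mul_left h2 (Nat.zero_le _)
  omega

/-- The set `{0, 1, ..., 2^s - 1} ⊆ ℤ/2^M ℤ` (with `s ≤ M`) is homogeneous
with pivot set `{0, 1, ..., s-1}`. -/
theorem consecutive_homogeneous (M s : ℕ) (hs : s ≤ M) :
    pivots M ((Finset.range (2^s)).image (fun n : ℕ => (n : ZMod (2^M)))) = Finset.range s ∧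
    IsHomogeneous M ((Finset.range (2^s)).image (fun n : ℕ => (n : ZMod (2^M)))) := by
  haveI : NeZero (2 ^ M) := ⟨(pow_pos two_pos M).ne'⟩
  have hpow : (2 : ℕ) ^ s ≤ 2 ^ M := Nat.pow_le_pow_right (by norm_num) hs
  set J : Finset (ZMod (2^M)) := (Finset.range (2^s)).image (fun n : ℕ => (n : ZMod (2^M)))
    with hJ
  -- the key computation of pivot values
  have key : ∀ a b : ℕ, a < 2 ^ s → b < 2 ^ s → a < b →
      padicValNat 2 (((a : ZMod (2^M)) - b).val) = padicValNat 2 (b - a) := by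
    intro a b ha hb hab
    have hd0 : 0 < b - a := by omega
    have hds : b - a < 2 ^ s := by omega
    have hdM : b - a < 2 ^ M := by omega
    have hcast : ((a : ZMod (2^M)) - b) = -((b - a : ℕ) : ZMod (2^M)) := by
      push_cast [Nat.cast_sub hab.le]; ring
    have hne : ((b - a : ℕ) : ZMod (2^M)) ≠ 0 := by
      intro h
      have := ZMod.val_cast_of_lt hdM
      rw [h, ZMod.val_zero] at this
      omega
    rw [hcast, ZMod.neg_val, if_neg hne, ZMod.val_cast_of_lt hdM,
      v2_sub M (b - a) hd0 hdM ((v2_lt s _ hd0 hds).trans_le hs)]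
  have key' : ∀ a b : ℕ, a < 2 ^ s → b < 2 ^ s → b < a →
      padicValNat 2 (((a : ZMod (2^M)) - b).val) = padicValNat 2 (a - b) := by
    intro a b ha hb hab
    have hdM : a - b < 2 ^ M := by omega
    have hcast : ((a : ZMod (2^M)) - b) = ((a - b : ℕ) : ZMod (2^M)) := by
      push_cast [Nat.cast_sub hab.le]; ring
    rw [hcast, ZMod.val_cast_of_lt hdM]
  have hmem : ∀ x : ZMod (2^M), x ∈ J ↔ ∃ n : ℕ, n < 2 ^ s ∧ (n : ZMod (2^M)) = x := by
    intro x; simp [hJ]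
  have hpiv : pivots M J = Finset.range s := by
    ext k
    simp only [pivots, Finset.mem_image, Finset.mem_offDiag, Finset.mem_range]
    constructor
    · rintro ⟨⟨x, y⟩, ⟨hx, hy, hxy⟩, rfl⟩
      obtain ⟨a, ha, rfl⟩ := (hmem x).mp hx
      obtain ⟨b, hb, rfl⟩ := (hmem y).mp hy
      have hab : a ≠ b := by rintro rfl; exact hxy rfl
      rcases lt_or_gt_of_ne hab with h | h
      · rw [key a b ha hb h]; exact (v2_lt s _ (by omega) (by omega)).trans_le le_rfl
      · rw [key' a b ha hb h]; exact v2_lt s _ (by omega) (by omega)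
    · intro hk
      refine ⟨(((2 ^ k : ℕ) : ZMod (2^M)), (0 : ZMod (2^M))), ⟨?_, ?_, ?_⟩, ?_⟩
      · exact (hmem _).mpr ⟨2 ^ k, Nat.pow_lt_pow_right one_lt_two hk, rfl⟩
      · exact (hmem _).mpr ⟨0, by positivity, by norm_num⟩
      · intro h
        simp only at h
        have := ZMod.val_cast_of_lt (a := 2 ^ k)
          (lt_of_lt_of_le (Nat.pow_lt_pow_right one_lt_two hk) hpow)
        rw [h, ZMod.val_zero] at this
        exact absurd this.symm (by positivity)
      · have h1 : (2 ^ k : ℕ) < 2 ^ M :=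
          lt_of_lt_of_le (Nat.pow_lt_pow_right one_lt_two hk) hpow
        simp only [sub_zero, ZMod.val_cast_of_lt h1]
        exact padicValNat.prime_pow k
  refine ⟨hpiv, ?_⟩
  have hcard : J.card = 2 ^ s := by
    rw [hJ, Finset.card_image_of_injOn, Finset.card_range]
    intro a ha b hb hab
    simp only [Finset.coe_range, Set.mem_Iio] at ha hb
    have := congrArg ZMod.val hab
    rwa [ZMod.val_cast_of_lt (ha.trans_le hpow), ZMod.val_cast_of_lt (hb.trans_le hpow)] at this
  rw [IsHomogeneous, hpiv, Finset.card_range, hcard, Nat.log_pow (by norm_num)]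
end

section
/- Let N = 2^M and suppose J ⊆ Z_N is homogeneous with pivots r_1 < ... < r_s (so |J| = 2^s), and let I be the pivoted sampling pattern { Σ_k b_k 2^{M-1-r_k} : b_k ∈ {0,1} }. Then the 2^s × 2^s matrix F(J, I) with entries e^{-2πi j i / N} for j ∈ J, i ∈ I satisfies F(J,I) · F(J,I)* = 2^s · Id, i.e., F(J,I) is unitary up to scaling. In particular, every homogeneous set is spectral. -/
open Matrix
/-- The submatrix of the `2^M × 2^M` DFT matrix with rows indexed by `J`
and columns indexed by `I`. -/
noncomputable def Fsub (M : ℕ) (J I : Finset (ZMod (2^M))) : Matrix J I ℂ :=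
  fun j i => Complex.exp (-2 * Real.pi * Complex.I * (j.1.val : ℂ) * (i.1.val : ℂ) / (2^M))

/-- `J` is spectral if some square DFT submatrix with columns `J` is unitary up to scaling. -/
def IsSpectral (M : ℕ) (J : Finset (ZMod (2^M))) : Prop :=
  ∃ I : Finset (ZMod (2^M)), I.card = J.card ∧
    Fsub M J I * (Fsub M J I)ᴴ = (J.card : ℂ) • 1

lemma twoPow_sum_inj : Function.Injective (fun T : Finset ℕ => ∑ i ∈ T, 2^i) := by
  intro T T' h
  simp only at h
  have key : ∀ T : Finset ℕ, (∑ i ∈ T, 2^i).bitIndices = T.sort (· ≤ ·) := by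
    intro T
    have h1 : ((T.sort (· ≤ ·)).map (fun i => 2^i)).sum = ∑ i ∈ T, 2^i := by
      rw [Finset.sum_eq_multiset_sum, ← Multiset.sum_coe, ← Multiset.map_coe,
        Finset.sort_eq]
    rw [← h1, Nat.bitIndices_twoPowsum (Finset.sortedLT_sort T)]
  have h3 : T.sort (· ≤ ·) = T'.sort (· ≤ ·) := by rw [← key, ← key, h]
  have h2 := congrArg List.toFinset h3
  rwa [Finset.sort_toFinset, Finset.sort_toFinset] at h2

lemma sum_range_two_pow (M : ℕ) : ∑ i ∈ Finset.range M, 2^i = 2^M - 1 := by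
  induction M with
  | zero => simp
  | succ n ih => rw [Finset.sum_range_succ, ih, pow_succ]; have := Nat.one_le_two_pow (n := n); omega


lemma termEq (M : ℕ) (x y : ZMod (2^M)) [NeZero (2^M)] (i : ZMod (2^M)) :
    Complex.exp (-2 * Real.pi * Complex.I * (x.val : ℂ) * (i.val : ℂ) / (2^M))
      * star (Complex.exp (-2 * Real.pi * Complex.I * (y.val : ℂ) * (i.val : ℂ) / (2^M)))
    = Complex.exp (2 * Real.pi * Complex.I * (((y - x : ZMod (2^M)).val : ℕ) : ℂ) * (i.val : ℂ) / (2^M)) := by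
  obtain ⟨t, ht⟩ : (2^M : ℤ) ∣ ((y.val : ℤ) - (x.val : ℤ) - ((y - x : ZMod (2^M)).val : ℤ)) := by
    have h0 : (((y.val : ℤ) - (x.val : ℤ) - ((y - x : ZMod (2^M)).val : ℤ) : ℤ) : ZMod (2^M)) = 0 := by
      push_cast
      rw [ZMod.natCast_val, ZMod.natCast_val, ZMod.natCast_val, ZMod.cast_id, ZMod.cast_id,
        ZMod.cast_id]
      ring
    have := (ZMod.intCast_zmod_eq_zero_iff_dvd _ (2^M)).1 h0
    exact_mod_cast this
  have gen : ∀ a b c iv : ℕ, ∀ t : ℤ, ((b:ℤ) - a - c = 2^M * t) →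
      Complex.exp (-2 * Real.pi * Complex.I * (a : ℂ) * (iv : ℂ) / (2^M))
        * star (Complex.exp (-2 * Real.pi * Complex.I * (b : ℂ) * (iv : ℂ) / (2^M)))
      = Complex.exp (2 * Real.pi * Complex.I * (c : ℂ) * (iv : ℂ) / (2^M)) := by
    intro a b c iv t ht
    have hbC : (b : ℂ) = (a : ℂ) + (c : ℂ) + (2^M : ℂ) * (t : ℂ) := by
      have := congrArg (Int.cast : ℤ → ℂ) ht
      push_cast at this
      linear_combination this
    rw [Complex.star_def, ← Complex.exp_conj]
    have hconj : (starRingEnd ℂ) (-2 * ↑Real.pi * Complex.I * (b : ℂ) * (iv : ℂ) / (2^M))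
        = 2 * ↑Real.pi * Complex.I * (b : ℂ) * (iv : ℂ) / (2^M) := by
      simp only [map_div₀, _root_.map_mul, map_neg, Complex.conj_I, Complex.conj_ofReal, map_natCast,
        map_ofNat, map_pow]
      ring
    rw [hconj, ← Complex.exp_add]
    have h2M : (2^M : ℂ) ≠ 0 := pow_ne_zero _ two_ne_zero
    have hsplit : -2 * ↑Real.pi * Complex.I * (a : ℂ) * (iv : ℂ) / (2^M)
          + 2 * ↑Real.pi * Complex.I * (b : ℂ) * (iv : ℂ) / (2^M)
        = 2 * ↑Real.pi * Complex.I * (c : ℂ) * (iv : ℂ) / (2^M)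
          + ((t * iv : ℤ) : ℂ) * (2 * ↑Real.pi * Complex.I) := by
      rw [hbC]
      push_cast
      field_simp
      ring
    rw [hsplit, Complex.exp_add, Complex.exp_int_mul_two_pi_mul_I, mul_one]
  exact gen _ _ _ _ t ht


/-- If `J` is homogeneous with pivots `r₁ < ... < r_s` and `I` is the corresponding
pivoted sampling pattern, then `F(J,I)·F(J,I)* = 2^s · Id`; in particular every
homogeneous set is spectral. -/
theorem homogeneous_implies_spectral (M s : ℕ) (r : Fin s → ℕ) (hr : StrictMono r)
    (hrM : ∀ k, r k < M)
    (J : Finset (ZMod (2^M))) (hcard : J.card = 2^s)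
    (hpiv : pivots M J = Finset.univ.image r)
    (I : Finset (ZMod (2^M)))
    (hI : I = Finset.univ.image (fun b : Fin s → Bool =>
        ∑ k, if b k then ((2^(M-1-r k) : ℕ) : ZMod (2^M)) else 0)) :
    Fsub M J I * (Fsub M J I)ᴴ = ((2^s : ℕ) : ℂ) • 1 ∧ IsSpectral M J := by
  haveI : NeZero (2^M) := ⟨by positivity⟩
  have hNC : ((2^M : ℕ) : ℂ) ≠ 0 := Nat.cast_ne_zero.2 (by positivity)
  set e : Fin s → ℕ := fun k => M - 1 - r k with he
  have he_lt : ∀ k, e k < M := fun k => by have := hrM k; simp only [he]; omega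
  have he_inj : Function.Injective e := by
    intro a b hab
    have ha := hrM a; have hb := hrM b
    exact hr.injective (by simp only [he] at hab; omega)
  set natSum : (Fin s → Bool) → ℕ := fun b => ∑ k, if b k then 2^(e k) else 0 with hnatSum
  set S : (Fin s → Bool) → Finset ℕ :=
    fun b => (Finset.univ.filter fun k => b k = true).image e with hS
  have natSum_eq : ∀ b, natSum b = ∑ i ∈ S b, 2^i := by
    intro b
    rw [hS]
    rw [Finset.sum_image (fun a _ b _ h => he_inj h), Finset.sum_filter]
  have natSum_lt : ∀ b, natSum b < 2^M := by
    intro b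
    have hsub : S b ⊆ Finset.range M := by
      intro i hi
      simp only [hS, Finset.mem_image] at hi
      obtain ⟨k, _, hk⟩ := hi
      exact Finset.mem_range.2 (hk ▸ he_lt k)
    calc natSum b = ∑ i ∈ S b, 2^i := natSum_eq b
      _ ≤ ∑ i ∈ Finset.range M, 2^i := Finset.sum_le_sum_of_subset hsub
      _ = 2^M - 1 := sum_range_two_pow M
      _ < 2^M := by have := Nat.one_le_two_pow (n := M); omega
  have natSum_inj : Function.Injective natSum := by
    intro b b' h
    rw [natSum_eq, natSum_eq] at h
    have hSS := twoPow_sum_inj h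
    funext k
    have : (b k = true) ↔ (b' k = true) := by
      constructor <;> intro hk
      · have : e k ∈ S b' := by
          rw [← hSS]; exact Finset.mem_image_of_mem e (Finset.mem_filter.2 ⟨Finset.mem_univ _, hk⟩)
        simp only [hS, Finset.mem_image, Finset.mem_filter] at this
        obtain ⟨a, ⟨_, ha⟩, hae⟩ := this
        exact he_inj hae ▸ ha
      · have : e k ∈ S b := by
          rw [hSS]; exact Finset.mem_image_of_mem e (Finset.mem_filter.2 ⟨Finset.mem_univ _, hk⟩)
        simp only [hS, Finset.mem_image, Finset.mem_filter] at this
        obtain ⟨a, ⟨_, ha⟩, hae⟩ := this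
        exact he_inj hae ▸ ha
    exact Bool.eq_iff_iff.2 this
  set g : (Fin s → Bool) → ZMod (2^M) := fun b => ((natSum b : ℕ) : ZMod (2^M)) with hg
  have gval : ∀ b, (g b).val = natSum b := fun b => ZMod.val_cast_of_lt (natSum_lt b)
  have g_inj : Function.Injective g := by
    intro b b' h
    exact natSum_inj (by rw [← gval b, ← gval b', h])
  have hI' : I = Finset.univ.image g := by
    rw [hI]
    congr 1
    funext b
    rw [hg, hnatSum]
    push_cast
    exact Finset.sum_congr rfl fun k _ => rfl
  have hIcard : I.card = 2^s := by
    rw [hI', Finset.card_image_of_injective _ g_inj, Finset.card_univ]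
    simp
  -- main identity
  have main : Fsub M J I * (Fsub M J I)ᴴ = ((2^s : ℕ) : ℂ) • 1 := by
    ext j j'
    rw [Matrix.mul_apply, Matrix.smul_apply, Matrix.one_apply]
    have hterm : ∀ i : {x // x ∈ I},
        Fsub M J I j i * (Fsub M J I)ᴴ i j'
          = Complex.exp (2 * Real.pi * Complex.I * (((j'.1 - j.1 : ZMod (2^M)).val : ℕ) : ℂ)
              * ((i.1.val : ℕ) : ℂ) / (2^M)) := by
      intro i
      rw [Matrix.conjTranspose_apply]
      exact termEq M j.1 j'.1 i.1
    rw [Finset.sum_congr rfl (fun i _ => hterm i)]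
    have hsum1 : ∑ i : {x // x ∈ I},
        Complex.exp (2 * Real.pi * Complex.I * (((j'.1 - j.1 : ZMod (2^M)).val : ℕ) : ℂ)
          * ((i.1.val : ℕ) : ℂ) / (2^M))
        = ∑ b : Fin s → Bool,
            Complex.exp (2 * Real.pi * Complex.I * (((j'.1 - j.1 : ZMod (2^M)).val : ℕ) : ℂ)
              * ((natSum b : ℕ) : ℂ) / (2^M)) := by
      rw [Finset.sum_coe_sort I (fun i =>
        Complex.exp (2 * Real.pi * Complex.I * (((j'.1 - j.1 : ZMod (2^M)).val : ℕ) : ℂ)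
          * ((i.val : ℕ) : ℂ) / (2^M)))]
      rw [hI', Finset.sum_image (fun a _ b _ h => g_inj h)]
      exact Finset.sum_congr rfl fun b _ => by rw [gval]
    rw [hsum1]
    have hfact : ∀ b : Fin s → Bool,
        Complex.exp (2 * Real.pi * Complex.I * (((j'.1 - j.1 : ZMod (2^M)).val : ℕ) : ℂ)
          * ((natSum b : ℕ) : ℂ) / (2^M))
        = ∏ k, (if b k then
            Complex.exp (2 * Real.pi * Complex.I * (((j'.1 - j.1 : ZMod (2^M)).val : ℕ) : ℂ)
              * ((2:ℂ)^(e k)) / (2^M)) else 1) := by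
      intro b
      have hcast : ((natSum b : ℕ) : ℂ) = ∑ k, if b k then (2:ℂ)^(e k) else 0 := by
        rw [hnatSum]
        push_cast
        exact Finset.sum_congr rfl fun k _ => rfl
      rw [hcast, Finset.mul_sum, Finset.sum_div, Complex.exp_sum]
      exact Finset.prod_congr rfl fun k _ => by
        by_cases hbk : b k <;> simp [hbk]
    rw [Finset.sum_congr rfl (fun b _ => hfact b)]
    rw [← Fintype.prod_sum (fun k (x : Bool) => if x then
        Complex.exp (2 * Real.pi * Complex.I * (((j'.1 - j.1 : ZMod (2^M)).val : ℕ) : ℂ)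
          * ((2:ℂ)^(e k)) / (2^M)) else 1)]
    by_cases hjj : j = j'
    · subst hjj
      have hc0 : (j.1 - j.1 : ZMod (2^M)).val = 0 := by simp
      simp only [hc0, if_pos rfl, Nat.cast_zero, mul_zero, zero_mul, zero_div, Complex.exp_zero,
        Fintype.sum_bool, if_true, if_false]
      rw [Finset.prod_const, Finset.card_univ, Fintype.card_fin, smul_eq_mul, mul_one]
      push_cast
      ring
    · -- off-diagonal: some factor vanishes
      rw [if_neg hjj, smul_zero]
      have hne : j'.1 ≠ j.1 := fun h => hjj (Subtype.ext h.symm)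
      have hd0 : (j'.1 - j.1 : ZMod (2^M)) ≠ 0 := sub_ne_zero.2 hne
      have hdv0 : (j'.1 - j.1 : ZMod (2^M)).val ≠ 0 :=
        fun h => hd0 ((ZMod.val_eq_zero _).1 h)
      have hmem : padicValNat 2 (j'.1 - j.1 : ZMod (2^M)).val ∈ pivots M J :=
        Finset.mem_image.2 ⟨(j'.1, j.1), Finset.mem_offDiag.2 ⟨j'.2, j.2, hne⟩, rfl⟩
      rw [hpiv] at hmem
      obtain ⟨k0, -, hk0⟩ := Finset.mem_image.1 hmem
      set dv : ℕ := (j'.1 - j.1 : ZMod (2^M)).val with hdv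
      have hdvd : 2^(r k0) ∣ dv := hk0 ▸ pow_padicValNat_dvd
      set m : ℕ := dv / 2^(r k0) with hm
      have hm' : dv = 2^(r k0) * m := (Nat.mul_div_cancel' hdvd).symm
      have hmodd : ¬ 2 ∣ m := by
        have := Nat.not_dvd_ordCompl Nat.prime_two hdv0
        rwa [Nat.factorization_def dv Nat.prime_two, ← hk0] at this
      have hModd : Odd m := Nat.odd_iff.2 (by omega)
      have hM1 : 1 ≤ M := by have := hrM k0; omega
      have hkey : dv * 2^(e k0) = m * 2^(M-1) := by
        have hre : r k0 + e k0 = M - 1 := by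
          have := hrM k0
          simp only [he]
          omega
        rw [hm', mul_comm (2^(r k0)) m, mul_assoc, ← pow_add, hre]
      refine Finset.prod_eq_zero (Finset.mem_univ k0) ?_
      have hexp : 2 * Real.pi * Complex.I * ((dv : ℕ) : ℂ) * ((2:ℂ)^(e k0)) / (2^M)
          = (m : ℂ) * (Real.pi * Complex.I) := by
        have hcC : ((dv : ℕ) : ℂ) * (2:ℂ)^(e k0) = (m : ℂ) * (2:ℂ)^(M-1) := by
          exact_mod_cast congrArg (Nat.cast : ℕ → ℂ) hkey
        have h2 : (2:ℂ)^M = 2 * (2:ℂ)^(M-1) := by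
          rw [← pow_succ']
          congr 1
          omega
        have h2M1 : ((2:ℂ))^(M-1) ≠ 0 := pow_ne_zero _ two_ne_zero
        rw [h2]
        field_simp
        linear_combination hcC
      rw [Fintype.sum_bool, if_pos rfl, if_neg (by simp), hexp, Complex.exp_nat_mul,
        Complex.exp_pi_mul_I, hModd.neg_one_pow]
      ring
  exact ⟨main, I, by rw [hIcard, hcard], by rw [hcard]; exact_mod_cast main⟩
end

section
/- Let J ⊆ Z_N be a proper GAP of dimension d with N = 2^M, and let n be the number of pivots of J (distinct 2-adic valuations of differences of distinct elements, all < M). Then 2ⁿ ≤ n^d · 2^d · |J|. -/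
lemma pivot_aux_min (M : ℕ) (w : ℕ → ℕ) (P A B : Finset ℕ)
    (hw0 : ∀ r ∈ P, w r ≠ 0) (hwv : ∀ r ∈ P, padicValNat 2 (w r) = r)
    (hwlt : ∀ r ∈ P, w r < 2^M)
    (hA : A ⊆ P) (hB : B ⊆ P) (hd : Disjoint A B)
    (h : (∑ r ∈ A, w r) ≡ (∑ r ∈ B, w r) [MOD 2^M])
    (r0 : ℕ) (hr0A : r0 ∈ A) (hmin : ∀ r ∈ A ∪ B, r0 ≤ r) : False := by
  haveI : Fact (Nat.Prime 2) := ⟨Nat.prime_two⟩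
  have hr0P : r0 ∈ P := hA hr0A
  have hv0 : padicValNat 2 (w r0) = r0 := hwv _ hr0P
  have hne0 : w r0 ≠ 0 := hw0 _ hr0P
  have h2r : 2 ^ r0 ∣ w r0 := by simpa [hv0] using pow_padicValNat_dvd (p := 2) (n := w r0)
  have hr0M : r0 < M := by
    have h1 : 2 ^ r0 ≤ w r0 := Nat.le_of_dvd (Nat.pos_of_ne_zero hne0) h2r
    have h2 : (2:ℕ) ^ r0 < 2 ^ M := lt_of_le_of_lt h1 (hwlt _ hr0P)
    exact (Nat.pow_lt_pow_iff_right (by norm_num)).1 h2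
  have hqM : 2 ^ (r0+1) ∣ 2 ^ M := pow_dvd_pow 2 (by omega)
  have h' : (∑ r ∈ A, w r) ≡ (∑ r ∈ B, w r) [MOD 2^(r0+1)] := h.of_dvd hqM
  have hdvd : ∀ r ∈ P, r0 < r → 2 ^ (r0+1) ∣ w r := by
    intro r hr hlt
    have : 2 ^ r ∣ w r := by simpa [hwv r hr] using pow_padicValNat_dvd (p := 2) (n := w r)
    exact dvd_trans (pow_dvd_pow 2 (by omega)) this
  have hBdvd : 2 ^ (r0+1) ∣ ∑ r ∈ B, w r := by
    refine Finset.dvd_sum fun r hr => hdvd r (hB hr) ?_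
    have hne : r ≠ r0 := fun he => (Finset.disjoint_left.1 hd hr0A) (he ▸ hr)
    have := hmin r (Finset.mem_union_right _ hr)
    omega
  have hEdvd : 2 ^ (r0+1) ∣ ∑ r ∈ A.erase r0, w r := by
    refine Finset.dvd_sum fun r hr => hdvd r (hA (Finset.mem_of_mem_erase hr)) ?_
    have hne : r ≠ r0 := Finset.ne_of_mem_erase hr
    have := hmin r (Finset.mem_union_left _ (Finset.mem_of_mem_erase hr))
    omega
  have hAe : (∑ r ∈ A, w r) = w r0 + ∑ r ∈ A.erase r0, w r :=
    (Finset.add_sum_erase A w hr0A).symm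
  have hw0mod : w r0 ≡ 0 [MOD 2^(r0+1)] := by
    calc w r0 ≡ w r0 + ∑ r ∈ A.erase r0, w r [MOD 2^(r0+1)] := by
          conv_lhs => rw [← Nat.add_zero (w r0)]
          exact Nat.ModEq.add_left _ ((Nat.modEq_zero_iff_dvd).2 hEdvd).symm
      _ = ∑ r ∈ A, w r := hAe.symm
      _ ≡ ∑ r ∈ B, w r [MOD 2^(r0+1)] := h'
      _ ≡ 0 [MOD 2^(r0+1)] := (Nat.modEq_zero_iff_dvd).2 hBdvd
  have hdvd0 : 2 ^ (r0+1) ∣ w r0 := (Nat.modEq_zero_iff_dvd).1 hw0mod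
  have := (padicValNat_dvd_iff_le hne0).1 hdvd0
  omega

lemma pivot_sum_empty (M : ℕ) (w : ℕ → ℕ) (P A B : Finset ℕ)
    (hw0 : ∀ r ∈ P, w r ≠ 0) (hwv : ∀ r ∈ P, padicValNat 2 (w r) = r)
    (hwlt : ∀ r ∈ P, w r < 2^M)
    (hA : A ⊆ P) (hB : B ⊆ P) (hd : Disjoint A B)
    (h : (∑ r ∈ A, w r) ≡ (∑ r ∈ B, w r) [MOD 2^M]) : A = ∅ ∧ B = ∅ := by
  by_contra hc
  have hne : (A ∪ B).Nonempty := by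
    rcases Finset.eq_empty_or_nonempty A with h1 | h1
    · rcases Finset.eq_empty_or_nonempty B with h2 | h2
      · exact absurd ⟨h1, h2⟩ hc
      · exact h2.mono Finset.subset_union_right
    · exact h1.mono Finset.subset_union_left
  set r0 := (A ∪ B).min' hne with hr0
  have hr0mem := (A ∪ B).min'_mem hne
  have hmin : ∀ r ∈ A ∪ B, r0 ≤ r := fun r hr => (A ∪ B).min'_le r hr
  rcases Finset.mem_union.1 hr0mem with hA0 | hB0
  · exact pivot_aux_min M w P A B hw0 hwv hwlt hA hB hd h r0 hA0 hmin
  · exact pivot_aux_min M w P B A hw0 hwv hwlt hB hA hd.symm h.symm r0 hB0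
      (fun r hr => hmin r (by rwa [Finset.union_comm]))

/-- A proper GAP `J` of dimension `d` in `ℤ/2^M ℤ` with `n ≥ 1` pivots satisfies
`2ⁿ ≤ n^d · 2^d · |J|`. -/
theorem gap_pivot_bound (M d : ℕ) (a : ZMod (2^M)) (s : Fin d → ZMod (2^M))
    (Nl : Fin d → ℕ) (J : Finset (ZMod (2^M)))
    (hJ : J = Finset.univ.image (fun n : (∀ j, Fin (Nl j)) =>
        a + ∑ j, ((n j : ℕ) : ZMod (2^M)) * s j))
    (hproper : J.card = ∏ j, Nl j)
    (n : ℕ) (hn : n = (pivots M J).card) (hn1 : 1 ≤ n) :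
    2^n ≤ n^d * 2^d * J.card := by
  haveI : NeZero (2^M) := ⟨by positivity⟩
  haveI : Fact (Nat.Prime 2) := ⟨Nat.prime_two⟩
  have hPne : (pivots M J).Nonempty := Finset.card_pos.mp (by omega)
  have hJne : J.Nonempty := by
    obtain ⟨r, hr⟩ := hPne
    obtain ⟨p, hp, -⟩ := Finset.mem_image.1 hr
    exact ⟨p.1, (Finset.mem_offDiag.1 hp).1⟩
  have hNl : ∀ j, 0 < Nl j := by
    rw [hJ] at hJne
    obtain ⟨y, hy⟩ := hJne
    obtain ⟨f, -, -⟩ := Finset.mem_image.1 hy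
    exact fun j => (f j).pos
  haveI : Nonempty (∀ j, Fin (Nl j)) := ⟨fun j => ⟨0, hNl j⟩⟩
  have hex : ∀ r ∈ pivots M J, ∃ uu vv : ∀ j, Fin (Nl j),
      (∑ j, ((((uu j : ℕ) : ℤ) - ((vv j : ℕ) : ℤ) : ℤ) : ZMod (2^M)) * s j) ≠ 0 ∧
      padicValNat 2 (∑ j, ((((uu j : ℕ) : ℤ) - ((vv j : ℕ) : ℤ) : ℤ) : ZMod (2^M)) * s j).val = r := by
    intro r hr
    obtain ⟨p, hp, hval⟩ := Finset.mem_image.1 hr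
    obtain ⟨h1, h2, hnep⟩ := Finset.mem_offDiag.1 hp
    rw [hJ] at h1 h2
    obtain ⟨uu, -, hu⟩ := Finset.mem_image.1 h1
    obtain ⟨vv, -, hv⟩ := Finset.mem_image.1 h2
    have hx : (∑ j, ((((uu j : ℕ) : ℤ) - ((vv j : ℕ) : ℤ) : ℤ) : ZMod (2^M)) * s j) = p.1 - p.2 := by
      rw [← hu, ← hv]
      push_cast
      simp only [sub_mul, Finset.sum_sub_distrib]
      ring
    exact ⟨uu, vv, by rw [hx]; exact sub_ne_zero.2 hnep, by rw [hx]; exact hval⟩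
  choose! u v hx0 hxv using hex
  set x : ℕ → ZMod (2^M) := fun r => ∑ j, ((((u r j : ℕ) : ℤ) - ((v r j : ℕ) : ℤ) : ℤ) : ZMod (2^M)) * s j with hxdef
  set P := pivots M J with hP
  set F : Finset ℕ → ZMod (2^M) := fun S => ∑ r ∈ S, x r with hF
  have hcast : ∀ S : Finset ℕ, ((∑ r ∈ S, (x r).val : ℕ) : ZMod (2^M)) = F S := by
    intro S
    push_cast
    exact Finset.sum_congr rfl fun r _ => by rw [ZMod.natCast_val, ZMod.cast_id]
  have hw0 : ∀ r ∈ P, (x r).val ≠ 0 := fun r hr => by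
    rw [Ne, ZMod.val_eq_zero]; exact hx0 r hr
  have hwlt : ∀ r ∈ P, (x r).val < 2^M := fun r _ => ZMod.val_lt _
  have hinj : ∀ S ∈ P.powerset, ∀ T' ∈ P.powerset, F S = F T' → S = T' := by
    intro S hS T' hT' heq
    rw [Finset.mem_powerset] at hS hT'
    have hmod : (∑ r ∈ S, (x r).val) ≡ (∑ r ∈ T', (x r).val) [MOD 2^M] :=
      (ZMod.natCast_eq_natCast_iff _ _ _).1 (by rw [hcast, hcast, heq])
    have h1 : ∑ r ∈ S \ T', (x r).val + ∑ r ∈ S ∩ T', (x r).val = ∑ r ∈ S, (x r).val := by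
      rw [← Finset.sdiff_inter_self_left S T']
      exact Finset.sum_sdiff Finset.inter_subset_left
    have h2 : ∑ r ∈ T' \ S, (x r).val + ∑ r ∈ S ∩ T', (x r).val = ∑ r ∈ T', (x r).val := by
      rw [Finset.inter_comm, ← Finset.sdiff_inter_self_left T' S]
      exact Finset.sum_sdiff Finset.inter_subset_left
    have hmod2 : (∑ r ∈ S \ T', (x r).val) ≡ (∑ r ∈ T' \ S, (x r).val) [MOD 2^M] := by
      refine Nat.ModEq.add_right_cancel' (∑ r ∈ S ∩ T', (x r).val) ?_
      rw [h1, h2]; exact hmod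
    have := pivot_sum_empty M (fun r => (x r).val) P (S \ T') (T' \ S) hw0 hxv hwlt
      ((Finset.sdiff_subset).trans hS) ((Finset.sdiff_subset).trans hT')
      (disjoint_sdiff_sdiff) hmod2
    exact Finset.Subset.antisymm
      ((Finset.sdiff_eq_empty_iff_subset).1 this.1)
      ((Finset.sdiff_eq_empty_iff_subset).1 this.2)
  set Tset : Finset (ZMod (2^M)) := Finset.image
    (fun c : ∀ j, Fin (2*n*Nl j) =>
      ∑ j, ((((c j : ℕ) : ℤ) - (n : ℤ) * ((Nl j : ℤ) - 1) : ℤ) : ZMod (2^M)) * s j)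
    Finset.univ with hTset
  have hmaps : ∀ S ∈ P.powerset, F S ∈ Tset := by
    intro S hS
    rw [Finset.mem_powerset] at hS
    have hcard : S.card ≤ n := hn ▸ Finset.card_le_card hS
    set C : Fin d → ℤ := fun j => ∑ r ∈ S, (((u r j : ℕ) : ℤ) - ((v r j : ℕ) : ℤ)) with hC
    have hub : ∀ j, C j ≤ (n:ℤ) * ((Nl j : ℤ) - 1) := by
      intro j
      calc C j ≤ ∑ _r ∈ S, ((Nl j : ℤ) - 1) := Finset.sum_le_sum fun r _ => by
            have h1 : (u r j : ℕ) < Nl j := (u r j).isLt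
            omega
        _ = (S.card : ℤ) * ((Nl j : ℤ) - 1) := by rw [Finset.sum_const, nsmul_eq_mul]
        _ ≤ (n:ℤ) * ((Nl j : ℤ) - 1) := by
            have hb : (1:ℤ) ≤ (Nl j : ℤ) := by exact_mod_cast hNl j
            have hc : (S.card:ℤ) ≤ (n:ℤ) := by exact_mod_cast hcard
            exact mul_le_mul_of_nonneg_right hc (by omega)
    have hlb : ∀ j, -((n:ℤ) * ((Nl j : ℤ) - 1)) ≤ C j := by
      intro j
      have : ∑ _r ∈ S, -((Nl j : ℤ) - 1) ≤ C j := Finset.sum_le_sum fun r _ => by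
            have h1 : (v r j : ℕ) < Nl j := (v r j).isLt
            omega
      rw [Finset.sum_const, nsmul_eq_mul] at this
      have hb : (1:ℤ) ≤ (Nl j : ℤ) := by exact_mod_cast hNl j
      have hc : (S.card:ℤ) ≤ (n:ℤ) := by exact_mod_cast hcard
      nlinarith
    have hnn : ∀ j, 0 ≤ C j + (n:ℤ) * ((Nl j : ℤ) - 1) := fun j => by have := hlb j; omega
    have hlt : ∀ j, C j + (n:ℤ) * ((Nl j : ℤ) - 1) < 2*(n:ℤ)*(Nl j : ℤ) := by
      intro j
      have h1 := hub j
      have hb : (1:ℤ) ≤ (Nl j : ℤ) := by exact_mod_cast hNl j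
      have hc : (1:ℤ) ≤ (n:ℤ) := by exact_mod_cast hn1
      nlinarith
    refine Finset.mem_image.2 ⟨fun j => ⟨(C j + (n:ℤ) * ((Nl j : ℤ) - 1)).toNat, ?_⟩, Finset.mem_univ _, ?_⟩
    · have ha := hnn j; have hb := hlt j
      have : ((2*n*Nl j : ℕ) : ℤ) = 2*(n:ℤ)*(Nl j:ℤ) := by push_cast; ring
      omega
    · have key : ∀ j, ((((C j + (n:ℤ) * ((Nl j : ℤ) - 1)).toNat : ℕ) : ℤ) - (n:ℤ) * ((Nl j : ℤ) - 1)) = C j := by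
        intro j; rw [Int.toNat_of_nonneg (hnn j)]; ring
      simp only [key, hF, hxdef]
      rw [Finset.sum_comm (s := S) (t := (Finset.univ : Finset (Fin d)))
        (f := fun r j => ((((u r j : ℕ) : ℤ) - ((v r j : ℕ) : ℤ) : ℤ) : ZMod (2^M)) * s j)]
      refine Finset.sum_congr rfl fun j _ => ?_
      rw [hC, Int.cast_sum, Finset.sum_mul]
  have hcount1 : (P.powerset).card ≤ Tset.card := by
    apply Finset.card_le_card_of_injOn F hmaps
    intro S hS T' hT' heq
    exact hinj S (Finset.mem_coe.1 hS) T' (Finset.mem_coe.1 hT') heq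
  have hcount2 : Tset.card ≤ ∏ j, (2*n*Nl j) := by
    refine le_trans Finset.card_image_le ?_
    simp [Finset.card_univ]
  have hpow : (P.powerset).card = 2^n := by rw [Finset.card_powerset, hn]
  have hprod : ∏ j, (2*n*Nl j) = 2^d * n^d * ∏ j, Nl j := by
    rw [Finset.prod_mul_distrib, Finset.prod_mul_distrib, Finset.prod_const, Finset.prod_const,
      Finset.card_univ, Fintype.card_fin]
  rw [hproper]
  calc 2^n = (P.powerset).card := hpow.symm
    _ ≤ Tset.card := hcount1
    _ ≤ ∏ j, (2*n*Nl j) := hcount2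
    _ = 2^d * n^d * ∏ j, Nl j := hprod
    _ = n^d * 2^d * ∏ j, Nl j := by ring
end

section
/- Let J ⊆ Z_N, N = 2^M, be an arithmetic progression J = {a, a+s, a+2s, ..., a+(k-1)s} with k distinct elements, and write s = 2^α · (odd). Then every pivot of J lies in the set {α, α+1, ..., α + ⌊log₂ k⌋}; in particular J has at most ⌊log₂ k⌋ + 1 pivots. -/
/-- For an arithmetic progression `J = {a, a+s, ..., a+(k-1)s} ⊆ ℤ/2^M ℤ` with `k`
distinct elements and common difference `s = 2^α · odd`, every pivot of `J` lies in
`{α, α+1, ..., α + ⌊log₂ k⌋}`; in particular `J` has at most `⌊log₂ k⌋ + 1` pivots. -/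
theorem ap_pivots (M : ℕ) (a : ZMod (2^M)) (s0 : ℤ) (α : ℕ) (u : ℤ) (hu : Odd u)
    (hs : s0 = 2^α * u) (k : ℕ) (hk : 1 ≤ k)
    (J : Finset (ZMod (2^M)))
    (hJ : J = (Finset.range k).image
        (fun m : ℕ => a + (m : ZMod (2^M)) * (s0 : ZMod (2^M))))
    (hcard : J.card = k) :
    pivots M J ⊆ Finset.Icc α (α + Nat.log 2 k) ∧
    (pivots M J).card ≤ Nat.log 2 k + 1 := by
  haveI : Fact (Nat.Prime 2) := ⟨Nat.prime_two⟩
  haveI : NeZero (2 ^ M) := ⟨(pow_pos two_pos M).ne'⟩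
  have hsub : pivots M J ⊆ Finset.Icc α (α + Nat.log 2 k) := by
    intro pv hv
    simp only [pivots, Finset.mem_image] at hv
    obtain ⟨p, hp, hpv⟩ := hv
    rw [Finset.mem_offDiag] at hp
    obtain ⟨hp1, hp2, hne⟩ := hp
    rw [hJ, Finset.mem_image] at hp1 hp2
    obtain ⟨m1, hm1, h1⟩ := hp1
    obtain ⟨m2, hm2, h2'⟩ := hp2
    rw [Finset.mem_range] at hm1 hm2
    set m : ℤ := (m1 : ℤ) - (m2 : ℤ) with hmdef
    have hmne : m ≠ 0 := by
      intro h
      have : m1 = m2 := by omega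
      exact hne (by rw [← h1, ← h2', this])
    have hmabs : m.natAbs ≠ 0 := Int.natAbs_ne_zero.mpr hmne
    have hmlt : m.natAbs < k := by
      simp only [hmdef]
      omega
    set n : ℕ := (p.1 - p.2).val with hndef
    have hn0 : n ≠ 0 := by
      simp only [hndef, ne_eq, ZMod.val_eq_zero]
      exact sub_ne_zero.mpr hne
    have hnlt : n < 2 ^ M := ZMod.val_lt _
    -- congruence : 2^M ∣ n - m * s0
    have hcast : ((n : ℤ) : ZMod (2 ^ M)) = ((m * s0 : ℤ) : ZMod (2 ^ M)) := by
      push_cast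
      rw [hndef, ZMod.natCast_val, ZMod.cast_id, ← h1, ← h2', hmdef, Int.cast_sub]
      push_cast
      ring
    have hdvd : ((2 : ℤ) ^ M) ∣ m * s0 - (n : ℤ) := by
      have h := Int.ModEq.dvd ((ZMod.intCast_eq_intCast_iff' _ _ _).mp hcast)
      have hcoe : ((2 ^ M : ℕ) : ℤ) = (2 : ℤ) ^ M := by push_cast; ring
      rwa [hcoe] at h
    set w : ℕ := padicValNat 2 m.natAbs with hwdef
    set v : ℕ := α + w with hvdef
    have hwm : (2 : ℤ) ^ w ∣ m := by
      have : (2 : ℕ) ^ w ∣ m.natAbs := pow_padicValNat_dvd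
      exact Int.dvd_natAbs.mp (by exact_mod_cast this)
    have hms0 : m * s0 = 2 ^ α * (m * u) := by rw [hs]; ring
    have hvdvd : (2 : ℤ) ^ v ∣ m * s0 := by
      rw [hms0, hvdef, pow_add]
      exact mul_dvd_mul dvd_rfl (dvd_mul_of_dvd_left hwm u)
    have hvnot : ¬ (2 : ℤ) ^ (v + 1) ∣ m * s0 := by
      intro h
      rw [hms0, hvdef, add_assoc, pow_add] at h
      have h2 : (2 : ℤ) ^ (w + 1) ∣ m * u :=
        (mul_dvd_mul_iff_left (a := (2:ℤ)^α) (pow_ne_zero _ two_ne_zero)).mp h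
      -- transfer to ℕ
      have h3 : (2 : ℕ) ^ (w + 1) ∣ (m * u).natAbs := by
        have h4 := Int.natAbs_dvd_natAbs.mpr h2
        have h5 : ((2:ℤ) ^ (w+1)).natAbs = 2 ^ (w+1) := by
          rw [Int.natAbs_pow]; rfl
        rwa [h5] at h4
      have hu0 : u ≠ 0 := by rintro rfl; exact (Int.not_odd_iff_even.mpr Even.zero) hu
      have huabs : ¬ (2 : ℕ) ∣ u.natAbs := by
        have hodd : Odd u.natAbs := Int.natAbs_odd.mpr hu
        exact fun h => (Nat.not_even_iff_odd.mpr hodd) ((even_iff_two_dvd).mpr h)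
      have hval : padicValNat 2 ((m * u).natAbs) = w := by
        rw [Int.natAbs_mul, padicValNat.mul hmabs (Int.natAbs_ne_zero.mpr hu0),
          padicValNat.eq_zero_of_not_dvd huabs, hwdef, add_zero]
      have := pow_succ_padicValNat_not_dvd (p := 2)
        (Int.natAbs_ne_zero.mpr (mul_ne_zero hmne hu0))
      rw [hval] at this
      exact this h3
    have hvM : v < M := by
      by_contra hle
      push_neg at hle
      have h1' : (2 : ℤ) ^ M ∣ m * s0 := dvd_trans (pow_dvd_pow 2 hle) hvdvd
      have h2' : (2 : ℤ) ^ M ∣ (n : ℤ) := (dvd_sub_right h1').mp (by simpa using hdvd)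
      have h3' : (2 : ℕ) ^ M ∣ n := by exact_mod_cast h2'
      exact absurd (Nat.le_of_dvd (Nat.pos_of_ne_zero hn0) h3') (not_le.mpr hnlt)
    have hvn : (2 : ℕ) ^ v ∣ n := by
      have h1' : (2 : ℤ) ^ v ∣ m * s0 - (n : ℤ) :=
        dvd_trans (pow_dvd_pow 2 hvM.le) hdvd
      have h2' : (2 : ℤ) ^ v ∣ (n : ℤ) := (dvd_sub_right hvdvd).mp h1'
      exact_mod_cast h2'
    have hvn1 : ¬ (2 : ℕ) ^ (v + 1) ∣ n := by
      intro h
      have h1' : (2 : ℤ) ^ (v + 1) ∣ (n : ℤ) := by exact_mod_cast h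
      have h2' : (2 : ℤ) ^ (v + 1) ∣ m * s0 - (n : ℤ) :=
        dvd_trans (pow_dvd_pow 2 hvM) hdvd
      exact hvnot (by have := dvd_add h2' h1'; simpa using this)
    have hpvv : pv = v := by
      have hle1 : v ≤ padicValNat 2 n := (padicValNat_dvd_iff_le hn0).mp hvn
      have hle2 : ¬ (v + 1 ≤ padicValNat 2 n) :=
        fun h => hvn1 ((padicValNat_dvd_iff_le hn0).mpr h)
      omega
    rw [hpvv]
    have hwlog : w ≤ Nat.log 2 k := by
      have h2w : 2 ^ w ≤ m.natAbs :=
        Nat.le_of_dvd (Nat.pos_of_ne_zero hmabs) pow_padicValNat_dvd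
      exact (Nat.le_log_iff_pow_le one_lt_two (by omega)).mpr (by omega)
    rw [Finset.mem_Icc]
    omega
  refine ⟨hsub, ?_⟩
  calc (pivots M J).card ≤ (Finset.Icc α (α + Nat.log 2 k)).card :=
        Finset.card_le_card hsub
    _ = Nat.log 2 k + 1 := by rw [Nat.card_Icc]; omega
end

section
/- Let N = 2^M, let J ⊆ Z_N be a union J = ⋃_{i=0}^{a} ⋃_{j=0}^{η_i - 1} J_{ij}, where each J_{ij} is an elementary set of size 2^i (contains exactly one element from each congruence class modulo 2^i) and η_i ≤ C for all i. Then for any s ≤ a and any residue class v modulo 2^s, the number of elements of J congruent to v mod 2^s is at most C·(s + 2^{a - s + 1} - 1). -/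
lemma elem_filter_card (M i s : ℕ) (E : Finset (ZMod (2^M)))
    (hE : ∀ v < 2^i, (E.filter (fun x => x.val % 2^i = v)).card = 1) (v : ℕ) :
    (E.filter (fun x => x.val % 2^s = v % 2^s)).card ≤ if i ≤ s then 1 else 2^(i-s) := by
  split_ifs with h
  · -- i ≤ s : contained in a single class mod 2^i
    have hsub : E.filter (fun x => x.val % 2^s = v % 2^s) ⊆
        E.filter (fun x => x.val % 2^i = v % 2^s % 2^i) := by
      intro x hx
      simp only [Finset.mem_filter] at hx ⊢
      refine ⟨hx.1, ?_⟩
      rw [← hx.2, Nat.mod_mod_of_dvd x.val (pow_dvd_pow 2 h)]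
    calc _ ≤ _ := Finset.card_le_card hsub
      _ = 1 := hE _ (Nat.mod_lt _ (Nat.two_pow_pos i))
  · push_neg at h
    have hsi : s ≤ i := le_of_lt h
    calc (E.filter (fun x => x.val % 2^s = v % 2^s)).card
        ≤ (Finset.range (2^(i-s))).card := ?_
      _ = 2^(i-s) := Finset.card_range _
    apply Finset.card_le_card_of_injOn (fun x => x.val % 2^i / 2^s)
    · intro x hx
      simp only [Finset.coe_range, Set.mem_Iio]
      have : x.val % 2^i < 2^i := Nat.mod_lt _ (Nat.two_pow_pos i)
      rw [Nat.div_lt_iff_lt_mul (Nat.two_pow_pos s)]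
      rwa [← pow_add, Nat.sub_add_cancel hsi]
    · intro x hx y hy hxy
      simp only [Finset.coe_filter, Set.mem_setOf_eq] at hx hy
      have hmx : x.val % 2^i % 2^s = v % 2^s := by
        rw [Nat.mod_mod_of_dvd x.val (pow_dvd_pow 2 hsi)]; exact hx.2
      have hmy : y.val % 2^i % 2^s = v % 2^s := by
        rw [Nat.mod_mod_of_dvd y.val (pow_dvd_pow 2 hsi)]; exact hy.2
      have heq : x.val % 2^i = y.val % 2^i := by
        have dx := Nat.div_add_mod (x.val % 2^i) (2^s)
        have dy := Nat.div_add_mod (y.val % 2^i) (2^s)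
        have hxy' : x.val % 2^i / 2^s = y.val % 2^i / 2^s := hxy
        have hmul : 2^s * (x.val % 2^i / 2^s) = 2^s * (y.val % 2^i / 2^s) := by
          rw [hxy']
        omega
      have hw : x.val % 2^i < 2^i := Nat.mod_lt _ (Nat.two_pow_pos i)
      have hcard := hE _ hw
      have hx' : x ∈ E.filter (fun z => z.val % 2^i = x.val % 2^i) := by
        simp [Finset.mem_filter, hx.1]
      have hy' : y ∈ E.filter (fun z => z.val % 2^i = x.val % 2^i) := by
        simp [Finset.mem_filter, hy.1, heq]
      exact Finset.card_le_one.mp (le_of_eq hcard) x hx' y hy'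

lemma sum_bound (C s a : ℕ) (hs : s ≤ a) :
    ∑ i ∈ Finset.range (a+1), C * (if i ≤ s then 1 else 2^(i-s)) ≤
      C * (s + 2^(a - s + 1) - 1) := by
  induction a, hs using Nat.le_induction with
  | base =>
      have : ∀ i ∈ Finset.range (s+1), C * (if i ≤ s then 1 else 2^(i-s)) = C := by
        intro i hi
        simp only [Finset.mem_range] at hi
        rw [if_pos (by omega)]; ring
      rw [Finset.sum_congr rfl this, Finset.sum_const, Finset.card_range]
      simp [Nat.sub_self, mul_comm]
  | succ a ha ih =>
      rw [Finset.sum_range_succ, if_neg (by omega)]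
      have h1 : a + 1 - s = a - s + 1 := by omega
      have h2 : a + 1 - s + 1 = a - s + 2 := by omega
      rw [h1]
      have hp : 1 ≤ 2^(a-s+1) := Nat.one_le_two_pow
      have : C * (s + 2^(a-s+1+1) - 1) = C * (s + 2^(a-s+1) - 1) + C * 2^(a-s+1) := by
        rw [← Nat.mul_add]
        congr 1
        have : 2^(a-s+1+1) = 2^(a-s+1) + 2^(a-s+1) := by ring
        omega
      rw [this]
      exact Nat.add_le_add ih le_rfl

/-- Aliasing bound for a union of elementary sets. If
`J = ⋃_{i=0}^{a} ⋃_{j<η_i} E_{ij}` where each `E_{ij}` is an elementary set of size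
`2^i` (exactly one element in each congruence class mod `2^i`) and `η_i ≤ C`, then
for any `s ≤ a` and any residue class `v` mod `2^s`, the number of elements of `J`
congruent to `v` mod `2^s` is at most `C·(s + 2^(a-s+1) - 1)`. -/
theorem union_elementary_weight_bound (M a C : ℕ) (η : ℕ → ℕ)
    (hη : ∀ i ≤ a, η i ≤ C)
    (E : ℕ → ℕ → Finset (ZMod (2^M)))
    (hE : ∀ i ≤ a, ∀ j < η i, ∀ v < 2^i,
      ((E i j).filter (fun x => x.val % 2^i = v)).card = 1)
    (J : Finset (ZMod (2^M)))
    (hJ : J = (Finset.range (a+1)).biUnion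
        (fun i => (Finset.range (η i)).biUnion (fun j => E i j)))
    (s : ℕ) (hs : s ≤ a) (v : ℕ) :
    (J.filter (fun x => x.val % 2^s = v % 2^s)).card ≤ C * (s + 2^(a - s + 1) - 1) := by
  subst hJ
  rw [Finset.filter_biUnion]
  refine le_trans (Finset.card_biUnion_le) (le_trans ?_ (sum_bound C s a hs))
  apply Finset.sum_le_sum
  intro i hi
  simp only [Finset.mem_range] at hi
  have hia : i ≤ a := by omega
  rw [Finset.filter_biUnion]
  refine le_trans (Finset.card_biUnion_le) ?_
  calc ∑ j ∈ Finset.range (η i), ((E i j).filter (fun x => x.val % 2^s = v % 2^s)).card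
      ≤ ∑ _j ∈ Finset.range (η i), (if i ≤ s then 1 else 2^(i-s)) := by
        apply Finset.sum_le_sum
        intro j hj
        simp only [Finset.mem_range] at hj
        exact elem_filter_card M i s (E i j) (hE i hia j hj) v
    _ = η i * (if i ≤ s then 1 else 2^(i-s)) := by
        rw [Finset.sum_const, Finset.card_range, smul_eq_mul]
    _ ≤ C * (if i ≤ s then 1 else 2^(i-s)) :=
        Nat.mul_le_mul_right _ (hη i hia)
end
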